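/- arXiv:2410.02322 — 3 statements merged into one kernel-verified Lean document; each statement's English description precedes it below -/
import Mathlib

section
/- Let X be a full, additively closed, extension-closed subcategory of an abelian category A, and let 0 → X → E → Y → 0 be a minimal universal extension of Y to X. Then Ext¹(E, X') = 0 for all X' ∈ X, i.e. E lies in the left Ext-orthogonal ^{⊥_E}X. -/
open CategoryTheory Limits ZeroObject

attribute [local instance] CategoryTheory.Limits.HasFiniteBiproducts.of_hasFiniteProducts

universe w v u

variable {A : Type u} [Category.{v} A] [Abelian A]

/-- `i : X ⟶ E` and `p : E ⟶ Y` form a short exact sequence `0 → X → E → Y → 0`. -/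
def IsShortExactSeq {X E Y : A} (i : X ⟶ E) (p : E ⟶ Y) : Prop :=
  ∃ w : i ≫ p = 0, (ShortComplex.mk i p w).ShortExact

/-- A torsion pair `(𝒯, ℱ)` in an abelian category. -/
structure TorsionPair (A : Type u) [Category.{v} A] [Abelian A] where
  tors : Set A
  free : Set A
  hom_vanish : ∀ {T F : A}, T ∈ tors → F ∈ free → ∀ f : T ⟶ F, f = 0
  exists_seq : ∀ X : A, ∃ (tX fX : A) (i : tX ⟶ X) (p : X ⟶ fX),
      tX ∈ tors ∧ fX ∈ free ∧ IsShortExactSeq i p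

/-- `M` lies in `add 𝒳`: it is a direct summand of a finite direct sum of objects of `𝒳`. -/
def InAdd (𝒳 : Set A) (M : A) : Prop :=
  ∃ (n : ℕ) (g : Fin n → A) (s : M ⟶ ⨁ g) (r : (⨁ g) ⟶ M),
    (∀ j, g j ∈ 𝒳) ∧ s ≫ r = 𝟙 M

/-- `Ext¹(Z, W) = 0`, expressed by the splitting of all short exact sequences
`0 → W → U → Z → 0`. -/
def Ext1Vanishes (Z W : A) : Prop :=
  ∀ ⦃U : A⦄ (i : W ⟶ U) (p : U ⟶ Z), IsShortExactSeq i p → ∃ r : U ⟶ W, i ≫ r = 𝟙 W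

/-- A short exact sequence `0 → X → E → Y → 0` with `X ∈ add 𝒳` is a universal extension
from `Y` to `𝒳` if every short exact sequence `0 → X' → U → Y → 0` with `X' ∈ 𝒳` is a
pushout of it, i.e. the connecting map `Hom(X, X') → Ext¹(Y, X')` is surjective. -/
def IsUniversalExtension (𝒳 : Set A) {X E Y : A} (i : X ⟶ E) (p : E ⟶ Y) : Prop :=
  InAdd 𝒳 X ∧ IsShortExactSeq i p ∧
  ∀ ⦃X' U : A⦄ (i' : X' ⟶ U) (p' : U ⟶ Y), X' ∈ 𝒳 → IsShortExactSeq i' p' →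
    ∃ (φ : X ⟶ X') (ψ : E ⟶ U), i ≫ ψ = φ ≫ i' ∧ ψ ≫ p' = p

/-- `Y` admits a universal extension to `𝒳`. -/
def AdmitsUniversalExtension (𝒳 : Set A) (Y : A) : Prop :=
  ∃ (X E : A) (i : X ⟶ E) (p : E ⟶ Y), IsUniversalExtension 𝒳 i p

/-- A morphism is right minimal if precomposing with an endomorphism which fixes it
forces the endomorphism to be an automorphism. -/
def RightMinimal {E Y : A} (p : E ⟶ Y) : Prop :=
  ∀ g : E ⟶ E, g ≫ p = p → IsIso g

/-- A Krull–Schmidt category: every object is a finite direct sum of objects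
with local endomorphism rings. -/
def KrullSchmidt (A : Type u) [Category.{v} A] [Abelian A] : Prop :=
  ∀ X : A, ∃ (n : ℕ) (g : Fin n → A),
    (∀ j, IsLocalRing (End (g j))) ∧ Nonempty (X ≅ ⨁ g)

/-- `f : M ⟶ X` is a left `𝒳`-approximation of `M`. -/
def IsLeftApprox (𝒳 : Set A) {M X : A} (f : M ⟶ X) : Prop :=
  X ∈ 𝒳 ∧ ∀ ⦃X' : A⦄, X' ∈ 𝒳 → ∀ g : M ⟶ X', ∃ h : X ⟶ X', f ≫ h = g

/-- `f : X ⟶ M` is a right `𝒳`-approximation of `M`. -/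
def IsRightApprox (𝒳 : Set A) {X M : A} (f : X ⟶ M) : Prop :=
  X ∈ 𝒳 ∧ ∀ ⦃X' : A⦄, X' ∈ 𝒳 → ∀ g : X' ⟶ M, ∃ h : X' ⟶ X, h ≫ f = g

/-- `𝒳` is covariantly finite: every object admits a left `𝒳`-approximation. -/
def CovariantlyFinite (𝒳 : Set A) : Prop :=
  ∀ M : A, ∃ (X : A) (f : M ⟶ X), IsLeftApprox 𝒳 f

/-- `𝒳` is contravariantly finite: every object admits a right `𝒳`-approximation. -/
def ContravariantlyFinite (𝒳 : Set A) : Prop :=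
  ∀ M : A, ∃ (X : A) (f : X ⟶ M), IsRightApprox 𝒳 f

/-- `𝒳` is functorially finite. -/
def FunctoriallyFinite (𝒳 : Set A) : Prop :=
  CovariantlyFinite 𝒳 ∧ ContravariantlyFinite 𝒳

/-- The left Ext-orthogonal `^{⊥_E}𝒯` of the torsion class of a torsion pair. -/
def perpE (P : TorsionPair A) : Set A :=
  {X | ∀ T ∈ P.tors, Ext1Vanishes X T}

/-! Pulling the extension `0 → X' → U → E → 0` back along `i : X ⟶ E` gives an extension
`0 → X' → K → X → 0`, so `K ∈ 𝒳` by extension-closure, together with an extension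
`0 → K → U → Y → 0`. Universality factors `p` through `U ⟶ E`, and right minimality of `p` turns
that factorisation into a section of `U ⟶ E`, which splits the original extension. -/

section ClosureUnderAdd

variable {𝒳 : Set A}

lemma biproduct_mem
    (hsum : ∀ {X Y : A}, X ∈ 𝒳 → Y ∈ 𝒳 → (X ⊞ Y) ∈ 𝒳)
    (hsummand : ∀ {X Y : A} (s : X ⟶ Y) (r : Y ⟶ X), s ≫ r = 𝟙 X → Y ∈ 𝒳 → X ∈ 𝒳)
    {W : A} (hW : W ∈ 𝒳) :
    ∀ {n : ℕ} (g : Fin n → A), (∀ j, g j ∈ 𝒳) → (⨁ g) ∈ 𝒳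
  | 0, g, _ => hsummand (0 : (⨁ g) ⟶ W) 0 (biproduct.hom_ext _ _ fun j => j.elim0) hW
  | n + 1, g, hg => by
    refine hsummand
      (biprod.lift (biproduct.π g 0) (biproduct.lift fun j : Fin n => biproduct.π g j.succ))
      (biprod.desc (biproduct.ι g 0) (biproduct.desc fun j : Fin n => biproduct.ι g j.succ))
      ?_ (hsum (hg 0) (biproduct_mem hsum hsummand hW _ fun j => hg j.succ))
    rw [biprod.lift_desc, biproduct.lift_desc, ← biproduct.total, Fin.sum_univ_succ]

lemma InAdd.mem
    (hsum : ∀ {X Y : A}, X ∈ 𝒳 → Y ∈ 𝒳 → (X ⊞ Y) ∈ 𝒳)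
    (hsummand : ∀ {X Y : A} (s : X ⟶ Y) (r : Y ⟶ X), s ≫ r = 𝟙 X → Y ∈ 𝒳 → X ∈ 𝒳)
    {M W : A} (hM : InAdd 𝒳 M) (hW : W ∈ 𝒳) : M ∈ 𝒳 := by
  obtain ⟨_, g, s, r, hg, hsr⟩ := hM
  exact hsummand s r hsr (biproduct_mem hsum hsummand hW g hg)

end ClosureUnderAdd

lemma IsShortExactSeq.mono {X E Y : A} {i : X ⟶ E} {p : E ⟶ Y} (h : IsShortExactSeq i p) :
    Mono i :=
  h.choose_spec.mono_f

lemma IsShortExactSeq.epi {X E Y : A} {i : X ⟶ E} {p : E ⟶ Y} (h : IsShortExactSeq i p) :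
    Epi p :=
  h.choose_spec.epi_g

lemma isShortExactSeq_kernel_ι {U Y : A} (q : U ⟶ Y) [Epi q] :
    IsShortExactSeq (kernel.ι q) q :=
  ⟨kernel.condition q, { exact := ShortComplex.exact_of_f_is_kernel _ (kernelIsKernel q) }⟩

section PseudoelementChase

attribute [local instance] Abelian.Pseudoelement.objectToSort
  Abelian.Pseudoelement.homToFun

open Abelian.Pseudoelement hiding comp_apply zero_apply
open Abelian.Pseudoelement renaming comp_apply → pseudo_comp_apply, zero_apply → pseudo_zero_apply

/-- `kernel (g ≫ p)` is the pullback of `g` along `i`, hence an extension of `X` by `X'`. -/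
lemma IsShortExactSeq.exists_isShortExactSeq_kernel_comp {X' U E X Y : A}
    {f : X' ⟶ U} {g : U ⟶ E} {i : X ⟶ E} {p : E ⟶ Y}
    (hfg : IsShortExactSeq f g) (hip : IsShortExactSeq i p) :
    ∃ (f' : X' ⟶ kernel (g ≫ p)) (t : kernel (g ≫ p) ⟶ X), IsShortExactSeq f' t := by
  have := hfg.mono
  have := hfg.epi
  have := hip.mono
  obtain ⟨wfg, hfg⟩ := hfg
  obtain ⟨wip, hip⟩ := hip
  let ι := kernel.ι (g ≫ p)
  have hfgp : f ≫ g ≫ p = 0 := by rw [reassoc_of% wfg, zero_comp]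
  let f' : X' ⟶ kernel (g ≫ p) := kernel.lift _ f hfgp
  have hf' : f' ≫ ι = f := kernel.lift_ι _ f hfgp
  obtain ⟨t, ht⟩ : ∃ t : kernel (g ≫ p) ⟶ X, t ≫ i = ι ≫ g :=
    ⟨_, (KernelFork.IsLimit.lift' hip.fIsKernel (ι ≫ g)
      (by rw [Category.assoc]; exact kernel.condition _)).2⟩
  have wf't : f' ≫ t = 0 := by
    rw [← cancel_mono i, Category.assoc, ht, reassoc_of% hf', wfg, zero_comp]
  have hexact : (ShortComplex.mk f' t wf't).Exact := by
    refine exact_of_pseudo_exact _ fun b hb => ?_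
    have hgb : g (ι b) = 0 := by
      rw [← pseudo_comp_apply, ← ht, pseudo_comp_apply, hb, apply_zero]
    obtain ⟨a, ha⟩ := pseudo_exact_of_exact hfg.exact (ι b) hgb
    exact ⟨a, pseudo_injective_of_mono ι (by rw [← pseudo_comp_apply, hf', ha])⟩
  have hepi : Epi t := by
    refine epi_of_pseudo_surjective _ fun x => ?_
    obtain ⟨u, hu⟩ := pseudo_surjective_of_epi g (i x)
    have hqu : (g ≫ p) u = 0 := by
      rw [pseudo_comp_apply, hu, ← pseudo_comp_apply, wip, pseudo_zero_apply]
    obtain ⟨k, hk⟩ := pseudo_exact_of_exact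
      (ShortComplex.exact_of_f_is_kernel (.mk _ _ (kernel.condition _)) (kernelIsKernel (g ≫ p)))
      u hqu
    exact ⟨k, pseudo_injective_of_mono i
      (by rw [← pseudo_comp_apply, ht, pseudo_comp_apply, hk, hu])⟩
  exact ⟨f', t, wf't, { exact := hexact, mono_f := mono_of_mono_fac hf' }⟩

end PseudoelementChase

lemma RightMinimal.exists_section {C : Type*} [Category C] {U E Y : C} {p : E ⟶ Y}
    (hm : RightMinimal p) (g : U ⟶ E) (ψ : E ⟶ U) (h : ψ ≫ g ≫ p = p) : ∃ s : E ⟶ U, s ≫ g = 𝟙 E := by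
  have := hm (ψ ≫ g) (by rwa [Category.assoc])
  exact ⟨inv (ψ ≫ g) ≫ ψ, by rw [Category.assoc, IsIso.inv_hom_id]⟩

lemma IsShortExactSeq.exists_retraction_of_section {X U E : A} {f : X ⟶ U} {g : U ⟶ E}
    (hfg : IsShortExactSeq f g) (s : E ⟶ U) (hs : s ≫ g = 𝟙 E) : ∃ r : U ⟶ X, f ≫ r = 𝟙 X := by
  have := hfg.mono
  obtain ⟨w, hfg⟩ := hfg
  let σ := ShortComplex.Splitting.ofExactOfSection (ShortComplex.mk f g w) hfg.exact s hs this
  exact ⟨σ.r, σ.f_r⟩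

/-- Wakamatsu-type lemma: if `𝒳` is additively closed and extension-closed and
`0 → X → E → Y → 0` is a minimal universal extension of `Y` to `𝒳`, then
`Ext¹(E, X') = 0` for every `X' ∈ 𝒳`, i.e. `E ∈ ^{⊥_E}𝒳`. -/
theorem stmt5 {𝒳 : Set A}
    (hsum : ∀ {X Y : A}, X ∈ 𝒳 → Y ∈ 𝒳 → (X ⊞ Y) ∈ 𝒳)
    (hsummand : ∀ {X Y : A} (s : X ⟶ Y) (r : Y ⟶ X), s ≫ r = 𝟙 X → Y ∈ 𝒳 → X ∈ 𝒳)
    (hext : ∀ {X E Y : A} (i : X ⟶ E) (p : E ⟶ Y),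
      IsShortExactSeq i p → X ∈ 𝒳 → Y ∈ 𝒳 → E ∈ 𝒳)
    {X E Y : A} {i : X ⟶ E} {p : E ⟶ Y}
    (hu : IsUniversalExtension 𝒳 i p) (hm : RightMinimal p) :
    ∀ X' ∈ 𝒳, Ext1Vanishes E X' := by
  obtain ⟨hXadd, hip, huniv⟩ := hu
  intro X' hX' U f g hfg
  have hX : X ∈ 𝒳 := hXadd.mem hsum hsummand hX'
  obtain ⟨f', t, hK⟩ := hfg.exists_isShortExactSeq_kernel_comp hip
  have := hfg.epi
  have := hip.epi
  obtain ⟨-, ψ, -, hψ⟩ :=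
    huniv _ _ (hext f' t hK hX' hX) (isShortExactSeq_kernel_ι (g ≫ p))
  obtain ⟨s, hs⟩ := hm.exists_section g ψ hψ
  exact hfg.exists_retraction_of_section s hs
end

section
/- Let (T, F) be a torsion pair in an abelian category A, and X ∈ ^{⊥_E}T (i.e. Ext¹(X, T) = 0 for all T ∈ T). Then the torsion-free part fX of X admits a universal extension to T; in fact the torsion sequence 0 → tX → X → fX → 0 is such a universal extension. -/
open CategoryTheory Limits ZeroObject

attribute [local instance] CategoryTheory.Limits.HasFiniteBiproducts.of_hasFiniteProducts

universe w v u

variable {A : Type u} [Category.{v} A] [Abelian A]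

/-!
Given an extension `0 → T' → U → fX → 0` with `T'` torsion, pull it back along `p : X ⟶ fX`.
The result is an extension of `X` by `T'`, which splits because `Ext¹(X, T') = 0`; its section
gives `ψ : X ⟶ U` over `fX`, and `ψ` restricts to `tX ⟶ T'` on the kernels. So every such
extension is a pushout of the torsion sequence, which is what universality means.
-/

lemma inAdd_of_mem {𝒳 : Set A} {M : A} (hM : M ∈ 𝒳) : InAdd 𝒳 M :=
  ⟨1, fun _ => M, biproduct.ι (fun _ => M) 0, biproduct.π (fun _ => M) 0, fun _ => hM,
    by simp⟩

lemma IsShortExactSeq.exists_pullback {W U Y Z : A} {i : W ⟶ U} {p : U ⟶ Y}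
    (h : IsShortExactSeq i p) (g : Z ⟶ Y) :
    ∃ j : W ⟶ pullback g p, IsShortExactSeq j (pullback.fst g p) := by
  obtain ⟨w, hS⟩ := h
  have : Mono i := hS.mono_f
  have : Epi p := hS.epi_g
  let j : W ⟶ pullback g p := pullback.lift 0 i (by simp [w])
  have hj_fst : j ≫ pullback.fst g p = 0 := pullback.lift_fst _ _ _
  have hj_snd : j ≫ pullback.snd g p = i := pullback.lift_snd _ _ _
  have : Mono j := mono_of_mono_fac hj_snd
  have hker : IsLimit (KernelFork.ofι j hj_fst) :=
    KernelFork.IsLimit.ofι' j hj_fst fun k hk =>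
      have hk' : (k ≫ pullback.snd g p) ≫ p = 0 := by
        rw [Category.assoc, ← pullback.condition, reassoc_of% hk, zero_comp]
      ⟨hS.exact.lift _ hk', pullback.hom_ext (by simp [hj_fst, hk])
        (by simpa [hj_snd] using hS.exact.lift_f _ hk')⟩
  exact ⟨j, hj_fst, .mk' (ShortComplex.exact_of_f_is_kernel _ hker) this inferInstance⟩

lemma Ext1Vanishes.exists_section {Z W U : A} (hZW : Ext1Vanishes Z W) {i : W ⟶ U}
    {p : U ⟶ Z} (h : IsShortExactSeq i p) : ∃ s : Z ⟶ U, s ≫ p = 𝟙 Z := by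
  obtain ⟨r, hr⟩ := hZW i p h
  obtain ⟨_, hS⟩ := h
  let σ := ShortComplex.Splitting.ofExactOfRetraction _ hS.exact r hr hS.epi_g
  exact ⟨σ.s, σ.s_g⟩

lemma Ext1Vanishes.exists_lift {Z W U Y : A} (hZW : Ext1Vanishes Z W) {i : W ⟶ U}
    {p : U ⟶ Y} (h : IsShortExactSeq i p) (g : Z ⟶ Y) : ∃ ψ : Z ⟶ U, ψ ≫ p = g := by
  obtain ⟨j, hj⟩ := h.exists_pullback g
  obtain ⟨s, hs⟩ := hZW.exists_section hj
  exact ⟨s ≫ pullback.snd g p, by rw [Category.assoc, ← pullback.condition, reassoc_of% hs]⟩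

lemma IsShortExactSeq.exists_comp_eq_comp {X E Y X' U : A} {i : X ⟶ E} {p : E ⟶ Y}
    {i' : X' ⟶ U} {p' : U ⟶ Y} (h : IsShortExactSeq i p) (h' : IsShortExactSeq i' p')
    (ψ : E ⟶ U) (hψ : ψ ≫ p' = p) : ∃ φ : X ⟶ X', i ≫ ψ = φ ≫ i' := by
  obtain ⟨w, -⟩ := h
  obtain ⟨w', hS'⟩ := h'
  have : Mono i' := hS'.mono_f
  have hiψ : (i ≫ ψ) ≫ p' = 0 := by rw [Category.assoc, hψ, w]
  exact ⟨hS'.exact.lift _ hiψ, (hS'.exact.lift_f _ hiψ).symm⟩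

lemma isUniversalExtension_of_ext1Vanishes (𝒳 : Set A) {X E Y : A} {i : X ⟶ E}
    {p : E ⟶ Y} (hX : InAdd 𝒳 X) (h : IsShortExactSeq i p)
    (hE : ∀ X' ∈ 𝒳, Ext1Vanishes E X') : IsUniversalExtension 𝒳 i p := by
  refine ⟨hX, h, fun X' U i' p' hX' h' => ?_⟩
  obtain ⟨ψ, hψ⟩ := (hE X' hX').exists_lift h' p
  obtain ⟨φ, hφ⟩ := h.exists_comp_eq_comp h' ψ hψ
  exact ⟨φ, ψ, hφ, hψ⟩

theorem stmt7_general (P : TorsionPair A) {tX X fX : A}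
    (i : tX ⟶ X) (p : X ⟶ fX) (ht : tX ∈ P.tors)
    (hse : IsShortExactSeq i p)
    (hperp : ∀ T ∈ P.tors, Ext1Vanishes X T) :
    IsUniversalExtension P.tors i p ∧ AdmitsUniversalExtension P.tors fX := by
  have hU := isUniversalExtension_of_ext1Vanishes P.tors (inAdd_of_mem ht) hse hperp
  exact ⟨hU, tX, X, i, p, hU⟩

/-- If `X ∈ ^{⊥_E}𝒯` then the torsion sequence `0 → tX → X → fX → 0` is a universal
extension from the torsion-free part `fX` to `𝒯`; in particular `fX` admits a universal
extension to `𝒯`. -/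
theorem stmt7 (P : TorsionPair A) {tX X fX : A}
    (i : tX ⟶ X) (p : X ⟶ fX) (ht : tX ∈ P.tors) (hf : fX ∈ P.free)
    (hse : IsShortExactSeq i p)
    (hperp : ∀ T ∈ P.tors, Ext1Vanishes X T) :
    IsUniversalExtension P.tors i p ∧ AdmitsUniversalExtension P.tors fX :=
  stmt7_general P i p ht hse hperp
end

section
/- Let A be a Krull–Schmidt abelian category with enough projectives and (T, F) a torsion pair with T covariantly finite. Then the pair (^{⊥_E}T, T) is a left-weak cotorsion pair: (1) Ext¹(C, T) = 0 for all C ∈ ^{⊥_E}T, T ∈ T; (2a) every A ∈ A admits a short exact sequence 0 → T → E →^f A → 0 with T ∈ T and f a right ^{⊥_E}T-approximation; (2b) every A ∈ A admits an exact sequence A →^g T' → X → 0 with g a left T-approximation and X ∈ ^{⊥_E}T. -/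
open CategoryTheory Limits ZeroObject

attribute [local instance] CategoryTheory.Limits.HasFiniteBiproducts.of_hasFiniteProducts

universe w v u

variable {A : Type u} [Category.{v} A] [Abelian A]

/-!
(2a): pushing a projective presentation `0 → K → P → M → 0` out along a left `𝒯`-approximation
of `K` gives a universal extension `0 → T₀ → E₀ → M → 0`: every extension of `M` by an object of
`𝒯` receives a map from `E₀` over `M`. By Krull–Schmidt, `E₀ → M` has a right minimal version
`f : E → M`, whose kernel is a retract of `T₀`, hence torsion. Given `0 → T' → U → E → 0` with
`T' ∈ 𝒯`, the composite `U → M` is again an extension of `M` by a torsion object, so `E` maps to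
`U` over `M`, and right minimality makes this map a section of `U → E`. So `E ∈ ^{⊥_E}𝒯`, and
pulling `0 → T → E → M → 0` back along maps out of `^{⊥_E}𝒯` shows that `f` is a right
approximation.

(2b) is Wakamatsu's lemma for a left minimal `𝒯`-approximation `g : M → T'`: an extension of
`coker g` by an object of `𝒯` pulls back to a torsion extension `V` of `T'`, `g` lifts to `V`, and
left minimality turns the lift into a section.

Minimal versions exist since, on a finite sum of objects with local endomorphism rings, a
non-invertible `u` with `u ≫ f = f` has `1 - u` outside the radical; this exhibits a local direct
summand killed by `f`, and cancelling it leaves a sum of fewer local objects.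
-/

lemma isIso_id_add_of_comp_self_eq_zero {X : A} {x : X ⟶ X} (hx : x ≫ x = 0) :
    IsIso (𝟙 X + x) :=
  ⟨𝟙 X - x, by simp [Preadditive.comp_sub, hx], by simp [Preadditive.sub_comp, hx]⟩

lemma Biprod.isIso_ofComponents {X₁ X₂ Y₁ Y₂ : A} (f₁₁ : X₁ ⟶ Y₁) (f₁₂ : X₁ ⟶ Y₂)
    (f₂₁ : X₂ ⟶ Y₁) (f₂₂ : X₂ ⟶ Y₂) [IsIso f₁₁] [IsIso (f₂₂ - f₂₁ ≫ inv f₁₁ ≫ f₁₂)] :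
    IsIso (Biprod.ofComponents f₁₁ f₁₂ f₂₁ f₂₂) := by
  let gauss := Biprod.gaussian' f₁₁ f₁₂ f₂₁ f₂₂
  have : IsIso (gauss.1.hom ≫ Biprod.ofComponents f₁₁ f₁₂ f₂₁ f₂₂ ≫ gauss.2.1.hom) := by
    rw [gauss.2.2.2]
    exact inferInstanceAs
      (IsIso (biprod.mapIso (asIso f₁₁) (asIso (f₂₂ - f₂₁ ≫ inv f₁₁ ≫ f₁₂))).hom)
  have := IsIso.of_isIso_comp_left gauss.1.hom
    (Biprod.ofComponents f₁₁ f₁₂ f₂₁ f₂₂ ≫ gauss.2.1.hom)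
  exact IsIso.of_isIso_comp_right _ gauss.2.1.hom

section LocalEndomorphisms

variable {G H : A}

lemma isIso_or_isIso_of_isIso_add [IsLocalRing (End H)] {x y : H ⟶ H} (h : IsIso (x + y)) :
    IsIso x ∨ IsIso y := by
  simpa only [← isUnit_iff_isIso] using
    IsLocalRing.isUnit_or_isUnit_of_isUnit_add (R := End H) ((isUnit_iff_isIso (x + y)).2 h)

lemma exists_isIso_of_isIso_sum [IsLocalRing (End H)] {ι : Type*} (s : Finset ι)
    (x : ι → (H ⟶ H)) (h : IsIso (∑ i ∈ s, x i)) : ∃ i ∈ s, IsIso (x i) := by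
  simpa only [← isUnit_iff_isIso] using
    IsLocalRing.exists_of_isUnit_sum (R := End H) ((isUnit_iff_isIso _).2 h)

lemma isIso_of_isIso_comp_of_isLocalRing [Nontrivial (End G)] [IsLocalRing (End H)]
    (a : G ⟶ H) (b : H ⟶ G) [IsIso (a ≫ b)] : IsIso a := by
  set c := b ≫ inv (a ≫ b)
  have hac : a ≫ c = 𝟙 G := by simp [c, ← Category.assoc]
  have hidem : (c ≫ a) ≫ (c ≫ a) = c ≫ a := by simp [reassoc_of% hac]
  -- the idempotent `c ≫ a` of the local ring `End H` is `1` or `0`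
  rcases isIso_or_isIso_of_isIso_add (x := c ≫ a) (y := 𝟙 H - c ≫ a) (by simp; infer_instance)
    with h | h
  · have hca : c ≫ a = 𝟙 H := by simpa using (cancel_mono (c ≫ a)).1 (hidem.trans (by simp))
    exact ⟨c, hac, hca⟩
  · have hca : c ≫ a = 0 :=
      (cancel_mono (𝟙 H - c ≫ a)).1 (by simp [Preadditive.comp_sub, hidem])
    have : 𝟙 G = 0 := by
      simpa [hac, reassoc_of% hac] using congrArg (fun t => a ≫ t ≫ c) hca
    exact (one_ne_zero (α := End G) this).elim

end LocalEndomorphisms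

def HasLocalDecomposition (n : ℕ) (X : A) : Prop :=
  ∃ g : Fin n → A, (∀ j, IsLocalRing (End (g j))) ∧ Nonempty (X ≅ ⨁ g)

def LeftMinimal {M X : A} (g : M ⟶ X) : Prop :=
  ∀ u : X ⟶ X, g ≫ u = g → IsIso u

namespace HasLocalDecomposition

variable {n : ℕ} {G X M : A}

lemma isZero (hX : HasLocalDecomposition 0 X) : IsZero X := by
  obtain ⟨g, -, ⟨e⟩⟩ := hX
  exact (IsZero.iff_id_eq_zero _).2 (biproduct.hom_ext _ _ fun j => j.elim0) |>.of_iso e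

lemma cokernel_of_splitMono (hX : HasLocalDecomposition (n + 1) X) [IsLocalRing (End G)]
    (β : G ⟶ X) (ρ : X ⟶ G) (hβρ : β ≫ ρ = 𝟙 G) : HasLocalDecomposition n (cokernel β) := by
  obtain ⟨g, hg, ⟨e⟩⟩ := hX
  have hsum : IsIso (∑ j, (β ≫ e.hom ≫ biproduct.π g j) ≫ biproduct.ι g j ≫ e.inv ≫ ρ) := by
    have : β ≫ e.hom ≫ (∑ j, biproduct.π g j ≫ biproduct.ι g j) ≫ e.inv ≫ ρ = 𝟙 G := by
      simp [hβρ]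
    simp only [Preadditive.comp_sum, Preadditive.sum_comp, Category.assoc] at this
    simp only [Category.assoc, this]
    infer_instance
  obtain ⟨j, -, hj⟩ := exists_isIso_of_isIso_sum _ _ hsum
  have := hg j
  set a := β ≫ e.hom ≫ biproduct.π g j
  have : IsIso a := isIso_of_isIso_comp_of_isLocalRing a (biproduct.ι g j ≫ e.inv ≫ ρ)
  -- `φ` is an automorphism of `⨁ g` moving the `j`-th summand onto the image of `β`
  set d := inv a ≫ β ≫ e.hom - biproduct.ι g j
  have hd : d ≫ biproduct.π g j = 0 := by simp [d, a]
  set φ := 𝟙 _ + biproduct.π g j ≫ d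
  have : IsIso φ := isIso_id_add_of_comp_self_eq_zero (by simp [reassoc_of% hd])
  have hφ : inv a ≫ β ≫ e.hom = biproduct.ι g j ≫ φ := by simp [φ, d]
  refine ⟨Subtype.restrict _ g ∘ finSuccAboveEquiv j, fun k => hg _, ⟨?_⟩⟩
  exact (cokernelCompIsIso β e.hom).symm ≪≫ (cokernelEpiComp (inv a) _).symm ≪≫
    cokernelIsoOfEq hφ ≪≫ cokernelCompIsIso _ φ ≪≫ cokernelBiproductιIso g j ≪≫
    (biproduct.reindex (finSuccAboveEquiv j) _).symm

lemma exists_splitting (hX : HasLocalDecomposition (n + 1) X) [IsLocalRing (End G)]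
    (β : G ⟶ X) (ρ : X ⟶ G) (hβρ : β ≫ ρ = 𝟙 G) :
    ∃ (Y : A) (π : X ⟶ Y) (w : β ≫ π = 0) (sp : (ShortComplex.mk β π w).Splitting),
      sp.r = ρ ∧ HasLocalDecomposition n Y :=
  ⟨_, cokernel.π β, cokernel.condition β, .ofExactOfRetraction _
    (ShortComplex.exact_of_g_is_cokernel _ (cokernelIsCokernel β)) ρ hβρ inferInstance, rfl,
    hX.cokernel_of_splitMono β ρ hβρ⟩

lemma exists_iso_biprod (hX : HasLocalDecomposition (n + 1) X) :
    ∃ G Y : A, IsLocalRing (End G) ∧ HasLocalDecomposition n Y ∧ Nonempty (X ≅ G ⊞ Y) := by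
  obtain ⟨g, hg, ⟨e⟩⟩ := hX
  have := hg 0
  obtain ⟨Y, π, w, sp, -, hY⟩ := exists_splitting ⟨g, hg, ⟨e⟩⟩
    (biproduct.ι g 0 ≫ e.inv) (e.hom ≫ biproduct.π g 0) (by simp)
  exact ⟨g 0, Y, hg 0, hY, ⟨sp.isoBinaryBiproduct⟩⟩

/-- Contrapositive of: `u` is invertible as soon as `𝟙 X - u` lies in the radical of `End X`. -/
theorem exists_isIso_comp_id_sub_comp (hX : HasLocalDecomposition n X) {u : X ⟶ X}
    (hu : ¬ IsIso u) :
    ∃ (G : A) (_ : IsLocalRing (End G)) (a : X ⟶ G) (b : G ⟶ X), IsIso (b ≫ (𝟙 X - u) ≫ a) := by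
  induction n generalizing X with
  | zero => exact absurd (by rw [hX.isZero.eq_of_src u (𝟙 X)]; infer_instance) hu
  | succ n ih =>
    obtain ⟨G, Y, hG, hY, ⟨e⟩⟩ := hX.exists_iso_biprod
    suffices ∃ (G' : A) (_ : IsLocalRing (End G')) (a : G ⊞ Y ⟶ G') (b : G' ⟶ G ⊞ Y),
        IsIso (b ≫ (𝟙 _ - e.inv ≫ u ≫ e.hom) ≫ a) by
      obtain ⟨G', hG', a, b, h⟩ := this
      exact ⟨G', hG', e.hom ≫ a, b ≫ e.inv,
        by simpa [Preadditive.comp_sub, Preadditive.sub_comp] using h⟩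
    set u' := e.inv ≫ u ≫ e.hom
    have hu' : ¬ IsIso u' := fun h =>
      hu (by simpa [u'] using (inferInstance : IsIso (e.hom ≫ u' ≫ e.inv)))
    rcases isIso_or_isIso_of_isIso_add (x := biprod.inl ≫ u' ≫ biprod.fst)
      (y := biprod.inl ≫ (𝟙 _ - u') ≫ biprod.fst)
      (by simp [Preadditive.comp_sub, Preadditive.sub_comp]; infer_instance) with h₁₁ | h₁₁
    · -- the Schur complement of the invertible corner of `u'` is not invertible either
      set s := biprod.inr ≫ u' ≫ biprod.snd - (biprod.inr ≫ u' ≫ biprod.fst) ≫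
        inv (biprod.inl ≫ u' ≫ biprod.fst) ≫ biprod.inl ≫ u' ≫ biprod.snd
      have hs : ¬ IsIso s := fun h => hu' (by
        rw [← Biprod.ofComponents_eq u']
        exact Biprod.isIso_ofComponents _ _ _ _)
      obtain ⟨G', hG', a, b, h⟩ := ih hY hs
      have key : b ≫ (𝟙 Y - s) ≫ a = (b ≫ biprod.inr) ≫ (𝟙 _ - u') ≫ biprod.snd ≫ a +
          (b ≫ biprod.inr) ≫ (𝟙 _ - u') ≫ biprod.fst ≫ inv (biprod.inl ≫ u' ≫ biprod.fst) ≫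
            biprod.inl ≫ (𝟙 _ - u') ≫ biprod.snd ≫ a := by
        simp [s, Preadditive.comp_sub, Preadditive.sub_comp]
        abel
      rw [key] at h
      rcases isIso_or_isIso_of_isIso_add h with h | h
      exacts [⟨G', hG', _, _, h⟩, ⟨G', hG', _, _, h⟩]
    · exact ⟨G, hG, biprod.fst, biprod.inl, h₁₁⟩

theorem exists_rightMinimal (hX : HasLocalDecomposition n X) (f : X ⟶ M) :
    ∃ (E : A) (s : E ⟶ X) (r : X ⟶ E), s ≫ r = 𝟙 E ∧ r ≫ s ≫ f = f ∧ RightMinimal (s ≫ f) := by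
  induction n generalizing X with
  | zero =>
    refine ⟨X, 𝟙 X, 𝟙 X, by simp, by simp, fun g _ => ?_⟩
    rw [hX.isZero.eq_of_src g (𝟙 X)]
    infer_instance
  | succ n ih =>
    by_cases hmin : RightMinimal f
    · exact ⟨X, 𝟙 X, 𝟙 X, by simp, by simp, by simpa⟩
    obtain ⟨g, hgf, hg⟩ : ∃ g : X ⟶ X, g ≫ f = f ∧ ¬ IsIso g := by
      simpa [RightMinimal] using hmin
    obtain ⟨G, hG, a, b, hv⟩ := hX.exists_isIso_comp_id_sub_comp hg
    set β := inv (b ≫ (𝟙 X - g) ≫ a) ≫ b ≫ (𝟙 X - g)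
    have hβf : β ≫ f = 0 := by simp [β, Preadditive.sub_comp, hgf]
    obtain ⟨Y, π, w, sp, -, hY⟩ := hX.exists_splitting β a
      (by simp only [β, Category.assoc, IsIso.inv_hom_id])
    have hf : π ≫ sp.s ≫ f = f := by
      simpa [Preadditive.add_comp, hβf] using sp.id =≫ f
    obtain ⟨E, s, r, hsr, hrsf, hmin'⟩ := ih hY (sp.s ≫ f)
    refine ⟨E, s ≫ sp.s, π ≫ r, ?_, ?_, by simpa using hmin'⟩
    · simpa [hsr] using s ≫= sp.s_g =≫ r
    · simp [hrsf, hf]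

theorem exists_leftMinimal (hX : HasLocalDecomposition n X) (f : M ⟶ X) :
    ∃ (E : A) (r : X ⟶ E) (s : E ⟶ X), s ≫ r = 𝟙 E ∧ f ≫ r ≫ s = f ∧ LeftMinimal (f ≫ r) := by
  induction n generalizing X with
  | zero =>
    refine ⟨X, 𝟙 X, 𝟙 X, by simp, by simp, fun u _ => ?_⟩
    rw [hX.isZero.eq_of_src u (𝟙 X)]
    infer_instance
  | succ n ih =>
    by_cases hmin : LeftMinimal f
    · exact ⟨X, 𝟙 X, 𝟙 X, by simp, by simp, by simpa⟩
    obtain ⟨u, hfu, hu⟩ : ∃ u : X ⟶ X, f ≫ u = f ∧ ¬ IsIso u := by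
      simpa [LeftMinimal] using hmin
    obtain ⟨G, hG, a, b, hv⟩ := hX.exists_isIso_comp_id_sub_comp hu
    set ρ := (𝟙 X - u) ≫ a ≫ inv (b ≫ (𝟙 X - u) ≫ a)
    have hfρ : f ≫ ρ = 0 := by simp [ρ, Preadditive.comp_sub, reassoc_of% hfu]
    obtain ⟨Y, π, w, sp, hr, hY⟩ := hX.exists_splitting b ρ
      (by simp only [ρ, ← Category.assoc, IsIso.hom_inv_id])
    have hf : f ≫ π ≫ sp.s = f := by
      simpa [Preadditive.comp_add, hr, reassoc_of% hfρ] using f ≫= sp.id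
    obtain ⟨E, r, s, hsr, hfrs, hmin'⟩ := ih hY (f ≫ π)
    refine ⟨E, π ≫ r, s ≫ sp.s, ?_, ?_, by simpa using hmin'⟩
    · simpa [hsr] using s ≫= sp.s_g =≫ r
    · simp [reassoc_of% hfrs, hf]

end HasLocalDecomposition

lemma inAdd_of_mem_s15 {𝒳 : Set A} {X : A} (hX : X ∈ 𝒳) : InAdd 𝒳 X :=
  ⟨1, fun _ => X, biproduct.ι (fun _ : Fin 1 => X) 0, biproduct.π _ 0, fun _ => hX, by simp⟩

namespace IsShortExactSeq

variable {X X' E U Y Y' Z : A} {i : X ⟶ E} {p : E ⟶ Y}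

lemma w (h : IsShortExactSeq i p) : i ≫ p = 0 := h.1

lemma mono_s15 (h : IsShortExactSeq i p) : Mono i := h.2.mono_f

lemma epi_s15 (h : IsShortExactSeq i p) : Epi p := h.2.epi_g

lemma exists_lift (h : IsShortExactSeq i p) (k : Z ⟶ E) (hk : k ≫ p = 0) :
    ∃ l : Z ⟶ X, l ≫ i = k :=
  have := h.mono_s15
  h.2.exact.lift' k hk

lemma exists_desc (h : IsShortExactSeq i p) (k : E ⟶ Z) (hk : i ≫ k = 0) :
    ∃ l : Y ⟶ Z, p ≫ l = k :=
  have := h.epi_s15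
  h.2.exact.desc' k hk

lemma of_lift [Mono i] [Epi p] (w : i ≫ p = 0)
    (hlift : ∀ {Z : A} (k : Z ⟶ E), k ≫ p = 0 → ∃ l : Z ⟶ X, l ≫ i = k) :
    IsShortExactSeq i p :=
  ⟨w, ⟨ShortComplex.exact_of_f_is_kernel _ <| KernelFork.IsLimit.ofι' i w fun k hk =>
    ⟨(hlift k hk).choose, (hlift k hk).choose_spec⟩⟩⟩

lemma of_desc [Mono i] [Epi p] (w : i ≫ p = 0)
    (hdesc : ∀ {Z : A} (k : E ⟶ Z), i ≫ k = 0 → ∃ l : Y ⟶ Z, p ≫ l = k) :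
    IsShortExactSeq i p :=
  ⟨w, ⟨ShortComplex.exact_of_g_is_cokernel _ <| CokernelCofork.IsColimit.ofπ' p w fun k hk =>
    ⟨(hdesc k hk).choose, (hdesc k hk).choose_spec⟩⟩⟩

lemma kernel_ι (p : E ⟶ Y) [Epi p] : IsShortExactSeq (kernel.ι p) p :=
  ⟨kernel.condition p, ⟨ShortComplex.exact_of_f_is_kernel _ (kernelIsKernel p)⟩⟩

lemma iso_comp (h : IsShortExactSeq i p) (e : X' ≅ X) : IsShortExactSeq (e.hom ≫ i) p := by
  have := h.mono_s15
  have := h.epi_s15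
  refine of_lift (by simp [h.w]) fun k hk => ?_
  obtain ⟨l, hl⟩ := h.exists_lift k hk
  exact ⟨l ≫ e.inv, by simp [hl]⟩

lemma exists_retraction_of_section_s15 (h : IsShortExactSeq i p) (σ : Y ⟶ E) (hσ : σ ≫ p = 𝟙 Y) :
    ∃ r : E ⟶ X, i ≫ r = 𝟙 X :=
  ⟨_, (ShortComplex.Splitting.ofExactOfSection _ h.2.exact σ hσ h.mono_s15).f_r⟩

lemma exists_section_of_retraction (h : IsShortExactSeq i p) (r : E ⟶ X) (hr : i ≫ r = 𝟙 X) :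
    ∃ σ : Y ⟶ E, σ ≫ p = 𝟙 Y :=
  ⟨_, (ShortComplex.Splitting.ofExactOfRetraction _ h.2.exact r hr h.epi_s15).s_g⟩

lemma pullback (h : IsShortExactSeq i p) (t : Y' ⟶ Y) :
    IsShortExactSeq (pullback.lift i 0 (by rw [h.w, zero_comp])) (Limits.pullback.snd p t) := by
  have := h.epi_s15
  have : Mono (pullback.lift i 0 (by rw [h.w, zero_comp]) : X ⟶ Limits.pullback p t) :=
    have := h.mono_s15
    mono_of_mono_fac (pullback.lift_fst _ _ _)
  refine of_lift (pullback.lift_snd _ _ _) fun k hk => ?_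
  obtain ⟨l, hl⟩ := h.exists_lift (k ≫ pullback.fst p t)
    (by simp [pullback.condition, reassoc_of% hk])
  exact ⟨l, pullback.hom_ext (by rw [Category.assoc, pullback.lift_fst, hl])
    (by rw [Category.assoc, pullback.lift_snd, comp_zero, hk])⟩

lemma pullback_fst (h : IsShortExactSeq i p) (q : U ⟶ E) [Epi q] :
    IsShortExactSeq (Limits.pullback.fst q i) (q ≫ p) := by
  have := h.mono_s15
  have := h.epi_s15
  refine of_lift (by simp [pullback.condition_assoc, h.w]) fun k hk => ?_
  obtain ⟨l, hl⟩ := h.exists_lift (k ≫ q) (by rwa [Category.assoc])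
  exact ⟨pullback.lift k l hl.symm, pullback.lift_fst _ _ _⟩

lemma pushout (h : IsShortExactSeq i p) (g : X ⟶ X') :
    IsShortExactSeq (Limits.pushout.inl g i) (pushout.desc 0 p (by rw [h.w, comp_zero])) := by
  have := h.mono_s15
  have : Epi (pushout.desc 0 p (by rw [h.w, comp_zero]) : Limits.pushout g i ⟶ Y) :=
    have := h.epi_s15
    epi_of_epi_fac (pushout.inr_desc _ _ _)
  refine of_desc (pushout.inl_desc _ _ _) fun k hk => ?_
  obtain ⟨l, hl⟩ := h.exists_desc (pushout.inr g i ≫ k)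
    (by rw [← pushout.condition_assoc, hk, comp_zero])
  exact ⟨l, pushout.hom_ext (by rw [pushout.inl_desc_assoc, zero_comp, hk])
    (by rw [pushout.inr_desc_assoc, hl])⟩

end IsShortExactSeq

namespace TorsionPair

variable (P : TorsionPair A)

/-- `P.tors` need not be closed under isomorphisms; this is its isomorphism closure, see
`IsTorsion.exists_iso_mem`. -/
def IsTorsion (X : A) : Prop :=
  ∀ ⦃F : A⦄, F ∈ P.free → ∀ f : X ⟶ F, f = 0

variable {P}

lemma isTorsion_of_mem {T : A} (hT : T ∈ P.tors) : P.IsTorsion T :=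
  fun _ hF f => P.hom_vanish hT hF f

lemma IsTorsion.exists_iso_mem {X : A} (hX : P.IsTorsion X) : ∃ T ∈ P.tors, Nonempty (X ≅ T) := by
  obtain ⟨T, F, i, p, hT, hF, hseq⟩ := P.exists_seq X
  have := hseq.mono_s15
  have : Epi i := (hseq.2.exact.epi_f_iff).2 (hX hF p)
  have := isIso_of_mono_of_epi i
  exact ⟨T, hT, ⟨(asIso i).symm⟩⟩

lemma IsTorsion.of_epi {T Q : A} (hT : P.IsTorsion T) (e : T ⟶ Q) [Epi e] : P.IsTorsion Q :=
  fun _ hF f => (cancel_epi e).1 (by simpa using hT hF (e ≫ f))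

lemma IsTorsion.of_shortExact {X W Y : A} {i : X ⟶ W} {p : W ⟶ Y} (hX : P.IsTorsion X)
    (h : IsShortExactSeq i p) (hY : P.IsTorsion Y) : P.IsTorsion W := fun _ hF f => by
  obtain ⟨l, hl⟩ := h.exists_desc f (hX hF _)
  rw [← hl, hY hF l, comp_zero]

end TorsionPair

lemma isRightApprox_of_shortExact {𝒞 : Set A} {T E M : A} {i : T ⟶ E} {f : E ⟶ M}
    (h : IsShortExactSeq i f) (hE : E ∈ 𝒞) (hext : ∀ C ∈ 𝒞, Ext1Vanishes C T) :
    IsRightApprox 𝒞 f := by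
  refine ⟨hE, fun X hX g => ?_⟩
  obtain ⟨r, hr⟩ := hext X hX _ _ (h.pullback g)
  obtain ⟨σ, hσ⟩ := (h.pullback g).exists_section_of_retraction r hr
  exact ⟨σ ≫ pullback.fst f g, by rw [Category.assoc, pullback.condition, reassoc_of% hσ]⟩

theorem exists_universalExtension [EnoughProjectives A] {𝒳 : Set A} (h𝒳 : CovariantlyFinite 𝒳)
    (M : A) : ∃ (X E : A) (i : X ⟶ E) (f : E ⟶ M), X ∈ 𝒳 ∧ IsUniversalExtension 𝒳 i f := by
  obtain ⟨X, g, hg⟩ := h𝒳 (kernel (Projective.π M))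
  have hK := IsShortExactSeq.kernel_ι (Projective.π M)
  refine ⟨X, _, _, _, hg.1, inAdd_of_mem_s15 hg.1, hK.pushout g, fun X' U i' p' hX' hses => ?_⟩
  have := hses.epi_s15
  set l := Projective.factorThru (Projective.π M) p'
  obtain ⟨δ, hδ⟩ := hses.exists_lift (kernel.ι (Projective.π M) ≫ l)
    (by rw [Category.assoc, Projective.factorThru_comp, kernel.condition])
  obtain ⟨h, hh⟩ := hg.2 hX' δ
  refine ⟨h, pushout.desc (h ≫ i') l (by rw [← Category.assoc, hh, hδ]),
    pushout.inl_desc _ _ _, ?_⟩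
  apply pushout.hom_ext
  · rw [pushout.inl_desc_assoc, pushout.inl_desc, Category.assoc, hses.w, comp_zero]
  · rw [pushout.inr_desc_assoc, pushout.inr_desc, Projective.factorThru_comp]

theorem mem_perpE_of_rightMinimal (P : TorsionPair A) {T E M X₀ E₀ : A} {i : T ⟶ E}
    {f : E ⟶ M} (hf : IsShortExactSeq i f) (hT : P.IsTorsion T) (hmin : RightMinimal f)
    {i₀ : X₀ ⟶ E₀} {f₀ : E₀ ⟶ M} (huniv : IsUniversalExtension P.tors i₀ f₀) (s : E ⟶ E₀)
    (hs : s ≫ f₀ = f) : E ∈ perpE P := by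
  intro T' hT' U j p hξ
  have := hξ.epi_s15
  obtain ⟨W, hW, ⟨e⟩⟩ :=
    ((P.isTorsion_of_mem hT').of_shortExact (hξ.pullback i) hT).exists_iso_mem
  obtain ⟨-, ψ, -, hψ⟩ := huniv.2.2 _ _ hW ((hf.pullback_fst p).iso_comp e.symm)
  have : IsIso (s ≫ ψ ≫ p) := hmin _ (by simp [hψ, hs])
  exact hξ.exists_retraction_of_section_s15 (inv (s ≫ ψ ≫ p) ≫ s ≫ ψ) (by simp)

theorem cokernel_mem_perpE_of_leftMinimal (P : TorsionPair A) {M T : A} {g : M ⟶ T}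
    (happ : IsLeftApprox P.tors g) (hmin : LeftMinimal g) : cokernel g ∈ perpE P := by
  intro T' hT' U j p hξ
  have hV := hξ.pullback (cokernel.π g)
  obtain ⟨V, hV', ⟨e⟩⟩ :=
    ((P.isTorsion_of_mem hT').of_shortExact hV (P.isTorsion_of_mem happ.1)).exists_iso_mem
  set m : M ⟶ pullback p (cokernel.π g) := pullback.lift 0 g (by simp)
  obtain ⟨h, hh⟩ := happ.2 hV' (m ≫ e.hom)
  set q := h ≫ e.inv ≫ pullback.snd p (cokernel.π g)
  have hgq : g ≫ q = g := by
    simp only [q, reassoc_of% hh, Iso.hom_inv_id_assoc, m, pullback.lift_snd]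
  have := hmin q hgq
  -- normalise the lift `h` so that it becomes a section of the pulled-back extension
  set h₁ := inv q ≫ h ≫ e.inv
  have hgh₁ : g ≫ h₁ = m := by
    have : g ≫ inv q = g := by simpa using (hgq =≫ inv q).symm
    simp [h₁, reassoc_of% this, reassoc_of% hh]
  have hh₁ : h₁ ≫ pullback.snd p (cokernel.π g) = 𝟙 T := by simp [h₁, q]
  refine hξ.exists_retraction_of_section_s15
    (cokernel.desc g (h₁ ≫ pullback.fst p _) (by rw [reassoc_of% hgh₁, pullback.lift_fst])) ?_
  rw [← cancel_epi (cokernel.π g)]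
  simp [pullback.condition, reassoc_of% hh₁]

theorem exists_shortExact_rightApprox_perpE [EnoughProjectives A] (hKS : KrullSchmidt A)
    (P : TorsionPair A) (hcov : CovariantlyFinite P.tors) (M : A) :
    ∃ (T E : A) (i : T ⟶ E) (f : E ⟶ M),
      T ∈ P.tors ∧ IsShortExactSeq i f ∧ IsRightApprox (perpE P) f := by
  obtain ⟨T₀, E₀, i₀, f₀, hT₀, huniv⟩ := exists_universalExtension hcov M
  obtain ⟨n, hn⟩ := hKS E₀
  obtain ⟨E, s, r, hsr, hrsf, hmin⟩ := HasLocalDecomposition.exists_rightMinimal hn f₀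
  have hf₀ := huniv.2.1
  have := hf₀.epi_s15
  have : Epi (s ≫ f₀) := epi_of_epi_fac hrsf
  have hf := IsShortExactSeq.kernel_ι (s ≫ f₀)
  -- the kernel of `s ≫ f₀` is a retract of the kernel `T₀` of `f₀`
  obtain ⟨d, hd⟩ := hf₀.exists_lift (kernel.ι (s ≫ f₀) ≫ s) (by simp)
  set u := kernel.lift (s ≫ f₀) (i₀ ≫ r) (by rw [Category.assoc, hrsf, hf₀.w])
  have : Epi u := epi_of_epi_fac (show d ≫ u = 𝟙 _ by ext; simp [u, reassoc_of% hd, hsr])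
  have hT := (P.isTorsion_of_mem hT₀).of_epi u
  obtain ⟨T, hT', ⟨e⟩⟩ := hT.exists_iso_mem
  refine ⟨T, E, e.inv ≫ kernel.ι _, s ≫ f₀, hT', hf.iso_comp e.symm,
    isRightApprox_of_shortExact (hf.iso_comp e.symm) ?_ fun C hC => hC T hT'⟩
  exact mem_perpE_of_rightMinimal P hf hT hmin huniv s rfl

theorem exists_leftApprox_cokernel_mem_perpE (hKS : KrullSchmidt A) (P : TorsionPair A)
    (hcov : CovariantlyFinite P.tors) (M : A) :
    ∃ (T : A) (g : M ⟶ T), IsLeftApprox P.tors g ∧ cokernel g ∈ perpE P := by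
  obtain ⟨T₀, g₀, hg₀⟩ := hcov M
  obtain ⟨n, hn⟩ := hKS T₀
  obtain ⟨E, r, s, hsr, hgrs, hmin⟩ := HasLocalDecomposition.exists_leftMinimal hn g₀
  have : Epi r := epi_of_epi_fac hsr
  obtain ⟨T, hT, ⟨e⟩⟩ := ((P.isTorsion_of_mem hg₀.1).of_epi r).exists_iso_mem
  have happ : IsLeftApprox P.tors (g₀ ≫ r ≫ e.hom) := by
    refine ⟨hT, fun X hX t => ?_⟩
    obtain ⟨h, hh⟩ := hg₀.2 hX t
    exact ⟨e.inv ≫ s ≫ h, by simp [reassoc_of% hgrs, hh]⟩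
  have hmin' : LeftMinimal (g₀ ≫ r ≫ e.hom) := fun u hu => by
    have := hmin (e.hom ≫ u ≫ e.inv) (by simpa using hu =≫ e.inv)
    simpa using (inferInstance : IsIso (e.inv ≫ (e.hom ≫ u ≫ e.inv) ≫ e.hom))
  exact ⟨T, _, happ, cokernel_mem_perpE_of_leftMinimal P happ hmin'⟩

/-- For a Krull–Schmidt abelian category with enough projectives and a torsion pair with
`𝒯` covariantly finite, `(^{⊥_E}𝒯, 𝒯)` is a left-weak cotorsion pair:
(1) `Ext¹(C, T) = 0` for `C ∈ ^{⊥_E}𝒯`, `T ∈ 𝒯`;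
(2a) every object `M` admits a short exact sequence `0 → T → E → M → 0` with `T ∈ 𝒯` and
`E → M` a right `^{⊥_E}𝒯`-approximation;
(2b) every object `M` admits a left `𝒯`-approximation `g : M ⟶ T'` whose cokernel lies
in `^{⊥_E}𝒯`. -/
theorem stmt15 [EnoughProjectives A] (hKS : KrullSchmidt A) (P : TorsionPair A)
    (hcov : CovariantlyFinite P.tors) :
    (∀ C ∈ perpE P, ∀ T ∈ P.tors, Ext1Vanishes C T) ∧
    (∀ M : A, ∃ (T E : A) (i : T ⟶ E) (f : E ⟶ M),
      T ∈ P.tors ∧ IsShortExactSeq i f ∧ IsRightApprox (perpE P) f) ∧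
    (∀ M : A, ∃ (T' : A) (g : M ⟶ T'),
      IsLeftApprox P.tors g ∧ cokernel g ∈ perpE P) :=
  ⟨fun _ hC T hT => hC T hT, exists_shortExact_rightApprox_perpE hKS P hcov,
    exists_leftApprox_cokernel_mem_perpE hKS P hcov⟩
end
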